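/- Let G = C_{n_1} × ... × C_{n_k} with 1 < n_1 | n_2 | ... | n_k, k ≥ 2, and suppose n_{k-1} = n_k. Then there exists a family {H_i}_{i∈I} of subgroups of G such that: (i) ∩_i H_i = 1, (ii) ∪_i H_i = G (the subgroups cover G), (iii) G/H_i ≅ G/H_j for all i, j, and (iv) H_i ≅ H_j for all i, j. -/

import Mathlib

/-- The abelian group with invariant factors `n 0 ∣ n 1 ∣ ... ∣ n (k-1)`. -/
abbrev IG (k : ℕ) (n : Fin k → ℕ) := ∀ i : Fin k, Multiplicative (ZMod (n i))

/-!
Let `H₀` be the kernel of the projection onto the last factor `ℤ/n_k`, and take as the family all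
images of `H₀` under automorphisms of `G`: any two of them are isomorphic, and so are their
quotients. It remains to move every `g ≠ 1` out of `H₀`, and every `g` into `H₀`, by automorphisms.
For the first, a transvection adding an injective image of a nontrivial coordinate of `g` to the
last coordinate suffices. For the second, since `n_{k-1} = n_k`, transvections between the last two
factors run Euclid's algorithm on the last two coordinates of `g` until the last one vanishes.
-/

namespace ZMod

def homOfDvd {a b : ℕ} (h : a ∣ b) : ZMod a →+ ZMod b :=
  lift a ⟨zmultiplesHom _ ((b / a : ℕ) : ZMod b), by
    simp [← Nat.cast_mul, Nat.mul_div_cancel' h]⟩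

theorem homOfDvd_injective {a b : ℕ} [NeZero b] (h : a ∣ b) :
    Function.Injective (homOfDvd h) := by
  rw [homOfDvd, lift_injective]
  intro m (hm : m • ((b / a : ℕ) : ZMod b) = 0)
  obtain ⟨d, rfl⟩ := h
  have ha : 0 < a := Nat.pos_of_ne_zero (left_ne_zero_of_mul (NeZero.ne (a * d)))
  have hd : (d : ℤ) ≠ 0 := by exact_mod_cast right_ne_zero_of_mul (NeZero.ne (a * d))
  rw [Nat.mul_div_cancel_left d ha, zsmul_eq_mul, ← Int.cast_natCast, ← Int.cast_mul,
    intCast_zmod_eq_zero_iff_dvd] at hm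
  rw [intCast_zmod_eq_zero_iff_dvd]
  push_cast at hm
  exact Int.dvd_of_mul_dvd_mul_right hd hm

theorem induction_on_elementary {m : ℕ} [NeZero m] {Q : ZMod m → ZMod m → Prop}
    (zero : ∀ x, Q x 0) (add_fst : ∀ x y t, Q (x + t * y) y → Q x y)
    (add_snd : ∀ x y t, Q x (y + t * x) → Q x y) (x y : ZMod m) : Q x y := by
  induction hN : y.val using Nat.strong_induction_on generalizing x y with
  | _ N ih =>
    by_cases hy : y = 0
    · exact hy ▸ zero x
    set r := x.val % y.val
    have hr : r < y.val := Nat.mod_lt _ (val_pos.mpr hy)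
    have hx : x + -(x.val / y.val : ℕ) * y = r := by
      have hdiv : x = y * (x.val / y.val : ℕ) + r := by
        conv_lhs => rw [← natCast_zmod_val x, ← Nat.div_add_mod x.val y.val]
        push_cast [natCast_zmod_val]
        rfl
      linear_combination hdiv
    apply add_fst x y (-(x.val / y.val : ℕ))
    rw [hx]
    -- Euclid's step: `(r, y)` is carried to `(-y, r)` by three elementary moves.
    apply add_fst _ _ (-1); apply add_snd _ _ 1; apply add_fst _ _ (-1)
    have := ih (r : ZMod m).val ?_ (-y) r rfl
    · convert this using 1 <;> ring
    · rw [val_cast_of_lt (hr.trans (val_lt y))]; omega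

end ZMod

namespace MulAut

variable {G : Type*} [CommGroup G]

def transvection (N : G →* G) (hN : ∀ g, N (N g) = 1) : MulAut G where
  toFun g := g * N g
  invFun g := g * (N g)⁻¹
  left_inv g := by simp [hN]
  right_inv g := by simp [hN]
  map_mul' g h := by simp only [map_mul]; exact mul_mul_mul_comm g h (N g) (N h)

@[simp]
theorem transvection_apply (N : G →* G) (hN : ∀ g, N (N g) = 1) (g : G) :
    transvection N hN g = g * N g := rfl

variable {ι : Type*} [DecidableEq ι] {β : ι → Type*} [∀ i, CommGroup (β i)]

def piTransvection {i j : ι} (hij : i ≠ j) (f : β i →* β j) : MulAut (∀ i, β i) :=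
  transvection ((MonoidHom.mulSingle β j).comp (f.comp (Pi.evalMonoidHom β i)))
    fun g => by simp [Pi.mulSingle_eq_of_ne hij]

variable {i j : ι} (hij : i ≠ j) (f : β i →* β j) (g : ∀ i, β i)

@[simp]
theorem piTransvection_apply_self : piTransvection hij f g j = g j * f (g i) := by
  simp [piTransvection]

theorem piTransvection_apply_of_ne {l : ι} (hl : l ≠ j) : piTransvection hij f g l = g l := by
  simp [piTransvection, Pi.mulSingle_eq_of_ne hl]

end MulAut

theorem Subgroup.exists_covering_by_automorphic_images {G : Type} [CommGroup G]
    (H₀ : Subgroup G) (hsep : ∀ g ≠ 1, ∃ φ : MulAut G, φ g ∉ H₀)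
    (hcover : ∀ g, ∃ φ : MulAut G, φ g ∈ H₀) :
    ∃ (I : Type) (H : I → Subgroup G),
      (⨅ i, H i) = ⊥ ∧
      (⋃ i, (H i : Set G)) = Set.univ ∧
      (∀ i j : I, Nonempty ((G ⧸ H i) ≃* (G ⧸ H j))) ∧
      (∀ i j : I, Nonempty (H i ≃* H j)) := by
  refine ⟨MulAut G, fun φ => H₀.map φ.toMonoidHom, ?_, ?_, fun φ ψ => ?_, fun φ ψ => ?_⟩
  · rw [eq_bot_iff]
    intro g hg
    by_contra hg1
    obtain ⟨φ, hφ⟩ := hsep g hg1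
    exact hφ (Subgroup.mem_map_equiv.mp (Subgroup.mem_iInf.mp hg φ.symm))
  · refine Set.eq_univ_of_forall fun g => Set.mem_iUnion.mpr ?_
    obtain ⟨φ, hφ⟩ := hcover g
    exact ⟨φ.symm, Subgroup.mem_map_equiv.mpr hφ⟩
  · exact ⟨(QuotientGroup.congr H₀ _ φ rfl).symm.trans (QuotientGroup.congr H₀ _ ψ rfl)⟩
  · exact ⟨(φ.subgroupMap H₀).symm.trans (ψ.subgroupMap H₀)⟩

section

variable {ι : Type*} [DecidableEq ι] {n : ι → ℕ} {q : ι} [NeZero (n q)]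

theorem exists_mulAut_apply_ne_one (hq : ∀ i, n i ∣ n q)
    {g : ∀ i, Multiplicative (ZMod (n i))} (hg : g ≠ 1) :
    ∃ φ : MulAut (∀ i, Multiplicative (ZMod (n i))), φ g q ≠ 1 := by
  by_cases hgq : g q = 1
  · obtain ⟨i, hi⟩ := Function.ne_iff.mp hg
    have hiq : i ≠ q := by rintro rfl; exact hi hgq
    refine ⟨MulAut.piTransvection hiq
      (AddMonoidHom.toMultiplicative (ZMod.homOfDvd (hq i))), ?_⟩
    rw [MulAut.piTransvection_apply_self, hgq, one_mul]
    exact fun h => hi ((map_eq_zero_iff _ (ZMod.homOfDvd_injective (hq i))).mp h)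
  · exact ⟨1, hgq⟩

theorem exists_mulAut_apply_eq_one {p : ι} (hpq : p ≠ q) (hn : n p = n q)
    (g : ∀ i, Multiplicative (ZMod (n i))) :
    ∃ φ : MulAut (∀ i, Multiplicative (ZMod (n i))), φ g q = 1 := by
  let e := ZMod.ringEquivCongr hn
  let S := {g : ∀ i, Multiplicative (ZMod (n i)) | ∃ φ : MulAut _, φ g q = 1}
  have mem_of_apply_mem (g) (ψ : MulAut (∀ i, Multiplicative (ZMod (n i)))) (h : ψ g ∈ S) :
      g ∈ S :=
    let ⟨φ, hφ⟩ := h; ⟨φ * ψ, hφ⟩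
  suffices ∀ x y : ZMod (n q), ∀ g : ∀ i, Multiplicative (ZMod (n i)),
      e (g p).toAdd = x → (g q).toAdd = y → g ∈ S from this _ _ g rfl rfl
  refine ZMod.induction_on_elementary ?_ ?_ ?_
  · intro x g _ hy
    exact ⟨1, congrArg Multiplicative.ofAdd hy⟩
  · intro x y t ih g hx hy
    refine mem_of_apply_mem g (MulAut.piTransvection hpq.symm (AddMonoidHom.toMultiplicative
      (e.symm.toAddMonoidHom.comp (AddMonoidHom.mulLeft t)))) (ih _ ?_ ?_)
    · simp [hx, hy]
    · rw [MulAut.piTransvection_apply_of_ne _ _ _ hpq.symm, hy]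
  · intro x y t ih g hx hy
    refine mem_of_apply_mem g (MulAut.piTransvection hpq (AddMonoidHom.toMultiplicative
      ((AddMonoidHom.mulLeft t).comp e.toAddMonoidHom))) (ih _ ?_ ?_)
    · rw [MulAut.piTransvection_apply_of_ne _ _ _ hpq, hx]
    · simp [hx, hy]

end

theorem stmt_6 (k : ℕ) (hk : 2 ≤ k) (n : Fin k → ℕ)
    (h1 : ∀ i, 1 < n i) (hdvd : ∀ i j : Fin k, i ≤ j → n i ∣ n j)
    (heq : n ⟨k - 2, by omega⟩ = n ⟨k - 1, by omega⟩) :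
    ∃ (I : Type) (H : I → Subgroup (IG k n)),
      (⨅ i, H i) = ⊥ ∧
      (⋃ i, (H i : Set (IG k n))) = Set.univ ∧
      (∀ i j : I, Nonempty ((IG k n ⧸ H i) ≃* (IG k n ⧸ H j))) ∧
      (∀ i j : I, Nonempty (H i ≃* H j)) := by
  set p : Fin k := ⟨k - 2, by omega⟩
  set q : Fin k := ⟨k - 1, by omega⟩
  have : NeZero (n q) := ⟨(zero_lt_one.trans (h1 q)).ne'⟩
  have hpq : p ≠ q := by simp only [p, q, ne_eq, Fin.mk.injEq]; omega
  have hq (i : Fin k) : n i ∣ n q := hdvd i q (Fin.mk_le_mk.mpr (by omega))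
  refine Subgroup.exists_covering_by_automorphic_images
    (Pi.evalMonoidHom (fun i => Multiplicative (ZMod (n i))) q).ker
    (fun g hg => exists_mulAut_apply_ne_one hq hg) (exists_mulAut_apply_eq_one hpq heq)
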